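/- Let X be a metric space, H₀ and H real Hilbert spaces, Φ : X → H₀ a bounded Borel-measurable map such that the kernel mean embedding Π is injective (characteristic kernel) and its image S = Π(P(X)) is compact, and let C ⊆ H be compact and convex. For each M ≥ 1 let g_M : X^M → C satisfy: (1) g_M(σ·x) = g_M(x) for every permutation σ of {1,…,M} and every x ∈ X^M; (2) there is L ≥ 0, independent of M, such that ‖g_M(x) − g_M(x')‖ ≤ L‖Π̂(x) − Π̂(x')‖ for all x, x' ∈ X^M. Then there exist a strictly increasing sequence of indices (M_ℓ)_ℓ and an L-Lipschitz map G : S → C such that lim_{ℓ→∞} sup_{x ∈ X^{M_ℓ}} ‖g_{M_ℓ}(x) − G(Π̂(x))‖ = 0. -/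

import Mathlib

open MeasureTheory

/-- The empirical embedding `Π̂(x) = (1/M) ∑ m, Φ (x m)` of a tuple `x ∈ X^M`. -/
noncomputable def empEmbed {X H₀ : Type*} [AddCommMonoid H₀] [Module ℝ H₀]
    (Φ : X → H₀) {M : ℕ} (x : Fin M → X) : H₀ :=
  (M : ℝ)⁻¹ • ∑ m : Fin M, Φ (x m)

/-- The image `S = Π(P(X))` of the set of all Borel probability measures on `X`
under the kernel mean embedding `Π(μ) = ∫ x, Φ x ∂μ`. -/
def kmeImage {X : Type*} [MeasurableSpace X] {H₀ : Type*} [NormedAddCommGroup H₀]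
    [NormedSpace ℝ H₀] (Φ : X → H₀) : Set H₀ :=
  {h : H₀ | ∃ μ : Measure X, IsProbabilityMeasure μ ∧ h = ∫ x, Φ x ∂μ}

/-!
The empirical embeddings `Π̂(x)` are the kernel mean embeddings of empirical measures, so they lie
in `S`; they are also dense in `S`. Indeed, their union over all lengths is closed under midpoints
(concatenate two tuples of a common length), so its closure is convex; it contains `Φ(X)` and hence
every barycentre `∫ Φ dμ`. Since a tuple of length `M` can be replicated to any length divisible
by `M`, every point of `S` is a limit of embeddings of tuples of length `(ℓ + 1)!`.

The theorem is then an Arzelà–Ascoli argument for the maps `Π̂(x) ↦ g_M(x)`, each of them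
`L`-Lipschitz but defined only on the embeddings of tuples of length `M`: along a dense sequence
`(e n)` of the compact set `S`, a diagonal subsequence makes the values of `g` at approximants of
each `e n` converge in the compact set `C`. The limits are `L`-Lipschitz in `e n` and extend to an
`L`-Lipschitz `G` on `S`, and a finite `δ`-net of `S` turns the convergence into uniform convergence.
-/

open Set Filter Topology Metric
open scoped ENNReal

lemma Icc_subset_of_isClosed_of_midpoint_mem {T : Set ℝ} (hT : IsClosed T)
    (hmid : ∀ a ∈ T, ∀ b ∈ T, midpoint ℝ a b ∈ T) {a b : ℝ} (ha : a ∈ T) (hb : b ∈ T) :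
    Icc a b ⊆ T := by
  rintro t ⟨hat, htb⟩
  by_contra ht
  -- The midpoint of the last point of `T` before `t` and the first one after `t` would lie in
  -- the gap between them.
  have hu := (isCompact_Icc.inter_left hT).sSup_mem ⟨a, ha, le_rfl, hat⟩
  have hv := (isCompact_Icc.inter_left hT).sInf_mem ⟨b, hb, htb, le_rfl⟩
  set u := sSup (T ∩ Icc a t)
  set v := sInf (T ∩ Icc t b)
  have hut : u < t := lt_of_le_of_ne hu.2.2 fun h => ht (h ▸ hu.1)
  have htv : t < v := lt_of_le_of_ne hv.2.1 fun h => ht (h ▸ hv.1)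
  have hm : (u + v) / 2 ∈ T := by
    convert hmid u hu.1 v hv.1 using 1
    rw [midpoint_eq_smul_add, smul_eq_mul, invOf_eq_inv]
    ring
  rcases le_total ((u + v) / 2) t with hmt | htm
  · have : (u + v) / 2 ≤ u :=
      le_csSup (isCompact_Icc.inter_left hT).bddAbove ⟨hm, by linarith [hu.2.1], hmt⟩
    linarith
  · have : v ≤ (u + v) / 2 :=
      csInf_le (isCompact_Icc.inter_left hT).bddBelow ⟨hm, htm, by linarith [hv.2.2]⟩
    linarith

lemma IsClosed.convex_of_midpoint_mem {E : Type*} [AddCommGroup E] [Module ℝ E]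
    [TopologicalSpace E] [IsTopologicalAddGroup E] [ContinuousSMul ℝ E] {K : Set E}
    (hK : IsClosed K) (hmid : ∀ a ∈ K, ∀ b ∈ K, midpoint ℝ a b ∈ K) : Convex ℝ K := by
  refine convex_iff_segment_subset.2 fun a ha b hb => ?_
  rw [segment_eq_image_lineMap, image_subset_iff]
  refine Icc_subset_of_isClosed_of_midpoint_mem (hK.preimage AffineMap.lineMap_continuous)
    (fun s hs t ht => ?_) (by simpa using ha) (by simpa using hb)
  simpa [mem_preimage, AffineMap.map_midpoint] using hmid _ hs _ ht

section LipschitzLimit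

variable {α β : Type*} [PseudoMetricSpace α] [PseudoMetricSpace β] {L : ℝ}

lemma exists_tendsto_comp_of_mem_closure_range {e : ℕ → α} {s : α}
    (hs : s ∈ closure (range e)) : ∃ k : ℕ → ℕ, Tendsto (e ∘ k) atTop (𝓝 s) := by
  obtain ⟨u, hu, hus⟩ := mem_closure_iff_seq_limit.1 hs
  choose k hk using hu
  exact ⟨k, by simpa only [Function.comp_def, hk] using hus⟩

lemma exists_seq_tendsto_of_tendsto_infDist {B : ℕ → Set α} (hB : ∀ ℓ, (B ℓ).Nonempty) {s : α}
    (hs : Tendsto (fun ℓ => infDist s (B ℓ)) atTop (𝓝 0)) :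
    ∃ b : ℕ → α, (∀ ℓ, b ℓ ∈ B ℓ) ∧ Tendsto b atTop (𝓝 s) := by
  have hb : ∀ ℓ : ℕ, ∃ b ∈ B ℓ, dist s b < infDist s (B ℓ) + 1 / (ℓ + 1) := fun ℓ =>
    (infDist_lt_iff (hB ℓ)).1 (lt_add_of_pos_right _ Nat.one_div_pos_of_nat)
  choose b hbB hbs using hb
  refine ⟨b, hbB, tendsto_iff_dist_tendsto_zero.2 <| squeeze_zero (fun _ => dist_nonneg)
    (fun ℓ => (dist_comm (b ℓ) s).trans_le (hbs ℓ).le) ?_⟩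
  simpa using hs.add tendsto_one_div_add_atTop_nhds_zero_nat

lemma exists_seq_tendsto_of_mem_closure_iUnion {A B : ℕ → Set α} (hB : ∀ ℓ, (B ℓ).Nonempty)
    (hAB : ∀ M, ∀ᶠ ℓ in atTop, A M ⊆ B ℓ) {s : α} (hs : s ∈ closure (⋃ M, A M)) :
    ∃ b : ℕ → α, (∀ ℓ, b ℓ ∈ B ℓ) ∧ Tendsto b atTop (𝓝 s) := by
  refine exists_seq_tendsto_of_tendsto_infDist hB ?_
  refine tendsto_order.2 ⟨fun ε hε => Eventually.of_forall fun ℓ => hε.trans_le infDist_nonneg,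
    fun ε hε => ?_⟩
  obtain ⟨a, ha, hsa⟩ := mem_closure_iff.1 hs ε hε
  obtain ⟨M, haM⟩ := mem_iUnion.1 ha
  filter_upwards [hAB M] with ℓ hℓ
  exact (infDist_le_dist_of_mem (hℓ haM)).trans_lt hsa

lemma exists_strictMono_tendsto_pi {C : Set β} (hC : IsCompact C) {v : ℕ → ℕ → β}
    (hv : ∀ ℓ n, v ℓ n ∈ C) :
    ∃ F : ℕ → β, (∀ n, F n ∈ C) ∧ ∃ φ : ℕ → ℕ, StrictMono φ ∧
      ∀ n, Tendsto (fun ℓ => v (φ ℓ) n) atTop (𝓝 (F n)) := by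
  obtain ⟨F, hF, φ, hφ, hlim⟩ :=
    (isCompact_univ_pi fun _ => hC).tendsto_subseq fun ℓ => mem_univ_pi.2 (hv ℓ)
  exact ⟨F, mem_univ_pi.1 hF, φ, hφ, tendsto_pi_nhds.1 hlim⟩

lemma exists_extension_of_dist_le {S : Set α} {C : Set β} (hC : IsCompact C) {e : ℕ → α}
    (hSe : S ⊆ closure (range e)) {F : ℕ → β} (hFC : ∀ n, F n ∈ C)
    (hF : ∀ n m, dist (F n) (F m) ≤ L * dist (e n) (e m)) :
    ∃ G : α → β, ∀ s ∈ S, G s ∈ C ∧ ∀ n, dist (G s) (F n) ≤ L * dist s (e n) := by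
  suffices h : ∀ s, ∃ c, s ∈ S → c ∈ C ∧ ∀ n, dist c (F n) ≤ L * dist s (e n) by
    choose G hG using h
    exact ⟨G, hG⟩
  intro s
  by_cases hs : s ∈ S
  swap
  · exact ⟨F 0, fun h => (hs h).elim⟩
  obtain ⟨k, hk⟩ := exists_tendsto_comp_of_mem_closure_range (hSe hs)
  obtain ⟨c, hc, ψ, hψ_mono, hψ⟩ := hC.tendsto_subseq fun j => hFC (k j)
  refine ⟨c, fun _ => ⟨hc, fun n => ?_⟩⟩
  exact le_of_tendsto_of_tendsto' (hψ.dist tendsto_const_nhds)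
    (((hk.comp hψ_mono.tendsto_atTop).dist tendsto_const_nhds).const_mul L) fun j => hF _ _

lemma dist_le_of_forall_dist_le {S : Set α} {e : ℕ → α} (hSe : S ⊆ closure (range e))
    {G : α → β} {F : ℕ → β} (hG : ∀ s ∈ S, ∀ n, dist (G s) (F n) ≤ L * dist s (e n))
    {s s' : α} (hs : s ∈ S) (hs' : s' ∈ S) : dist (G s) (G s') ≤ L * dist s s' := by
  obtain ⟨k, hk⟩ := exists_tendsto_comp_of_mem_closure_range (hSe hs')
  have hbound : Tendsto (fun j => L * dist s (e (k j)) + L * dist s' (e (k j))) atTop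
      (𝓝 (L * dist s s' + L * dist s' s')) :=
    ((tendsto_const_nhds.dist hk).const_mul L).add ((tendsto_const_nhds.dist hk).const_mul L)
  refine le_of_tendsto_of_tendsto' tendsto_const_nhds (by simpa using hbound) fun j => ?_
  calc dist (G s) (G s') ≤ dist (G s) (F (k j)) + dist (G s') (F (k j)) :=
        dist_triangle_right _ _ _
    _ ≤ _ := add_le_add (hG s hs _) (hG s' hs' _)

lemma eventually_forall_dist_lt_of_tendsto {ι : ℕ → Type*} {S : Set α} (hS : IsCompact S)
    (hL : 0 ≤ L) {e : ℕ → α} (hSe : S ⊆ closure (range e)) {p : ∀ ℓ, ι ℓ → α}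
    {f : ∀ ℓ, ι ℓ → β} (hpS : ∀ ℓ i, p ℓ i ∈ S)
    (hf : ∀ ℓ i j, dist (f ℓ i) (f ℓ j) ≤ L * dist (p ℓ i) (p ℓ j)) {t : ℕ → ∀ ℓ, ι ℓ}
    {F : ℕ → β} (hpt : ∀ n, Tendsto (fun ℓ => p ℓ (t n ℓ)) atTop (𝓝 (e n)))
    (hft : ∀ n, Tendsto (fun ℓ => f ℓ (t n ℓ)) atTop (𝓝 (F n))) {G : α → β}
    (hG : ∀ s ∈ S, ∀ n, dist (G s) (F n) ≤ L * dist s (e n)) {ε : ℝ} (hε : 0 < ε) :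
    ∀ᶠ ℓ in atTop, ∀ i, dist (f ℓ i) (G (p ℓ i)) < ε := by
  -- Compare `f ℓ i` with `f ℓ (t n ℓ)` for a point `e n` of a finite `δ`-net of `S`.
  obtain ⟨δ, hδ, hδε⟩ : ∃ δ > 0, (3 * L + 1) * δ = ε :=
    ⟨ε / (3 * L + 1), by positivity, by field_simp⟩
  obtain ⟨T, hT⟩ := hS.elim_finite_subcover (fun n => ball (e n) δ) (fun _ => isOpen_ball)
    fun s hs => mem_iUnion.2 ((mem_closure_range_iff.1 (hSe hs)) δ hδ)
  have hnet : ∀ᶠ ℓ in atTop, ∀ n ∈ T,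
      dist (p ℓ (t n ℓ)) (e n) < δ ∧ dist (f ℓ (t n ℓ)) (F n) < δ :=
    (eventually_all_finset T).2 fun n _ =>
      ((hpt n).eventually (ball_mem_nhds _ hδ)).and ((hft n).eventually (ball_mem_nhds _ hδ))
  filter_upwards [hnet] with ℓ hℓ i
  obtain ⟨n, hnT, hpn⟩ := mem_iUnion₂.1 (hT (hpS ℓ i))
  obtain ⟨hpt_near, hft_near⟩ := hℓ n hnT
  have hfi : dist (f ℓ i) (f ℓ (t n ℓ)) ≤ L * (2 * δ) :=
    (hf _ _ _).trans <| mul_le_mul_of_nonneg_left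
      (by linarith [mem_ball.1 hpn, dist_triangle_right (p ℓ i) (p ℓ (t n ℓ)) (e n)]) hL
  have hGi : dist (G (p ℓ i)) (F n) ≤ L * δ :=
    (hG _ (hpS ℓ i) n).trans (mul_le_mul_of_nonneg_left (mem_ball.1 hpn).le hL)
  linarith [dist_triangle (f ℓ i) (f ℓ (t n ℓ)) (G (p ℓ i)),
    dist_triangle_right (f ℓ (t n ℓ)) (G (p ℓ i)) (F n)]

theorem exists_strictMono_uniform_limit_of_lipschitz {ι : ℕ → Type*} [Nonempty β] {S : Set α}
    {C : Set β} (hS : IsCompact S) (hC : IsCompact C) (hL : 0 ≤ L) (p : ∀ ℓ, ι ℓ → α)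
    (f : ∀ ℓ, ι ℓ → β) (hpS : ∀ ℓ i, p ℓ i ∈ S) (hfC : ∀ ℓ i, f ℓ i ∈ C)
    (hf : ∀ ℓ i j, dist (f ℓ i) (f ℓ j) ≤ L * dist (p ℓ i) (p ℓ j))
    (hdense : ∀ s ∈ S, ∃ t : ∀ ℓ, ι ℓ, Tendsto (fun ℓ => p ℓ (t ℓ)) atTop (𝓝 s)) :
    ∃ φ : ℕ → ℕ, StrictMono φ ∧ ∃ G : α → β, (∀ s ∈ S, G s ∈ C) ∧
      (∀ s ∈ S, ∀ s' ∈ S, dist (G s) (G s') ≤ L * dist s s') ∧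
      ∀ ε > 0, ∀ᶠ ℓ in atTop, ∀ i, dist (f (φ ℓ) i) (G (p (φ ℓ) i)) < ε := by
  rcases S.eq_empty_or_nonempty with rfl | hS_ne
  · exact ⟨id, strictMono_id, fun _ => Classical.arbitrary β, by simp, by simp,
      fun _ _ => Eventually.of_forall fun ℓ i => (hpS ℓ i).elim⟩
  obtain ⟨D, hDS, hD, hSD⟩ := EMetric.subset_countable_closure_of_compact hS
  obtain ⟨e, rfl⟩ := hD.exists_eq_range (closure_nonempty_iff.1 (hS_ne.mono hSD))
  choose t ht using fun n => hdense (e n) (hDS (mem_range_self n))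
  obtain ⟨F, hFC, φ, hφ, hF⟩ := exists_strictMono_tendsto_pi hC fun ℓ n => hfC ℓ (t n ℓ)
  have ht' n : Tendsto (fun ℓ => p (φ ℓ) (t n (φ ℓ))) atTop (𝓝 (e n)) :=
    (ht n).comp hφ.tendsto_atTop
  have hF_lip n m : dist (F n) (F m) ≤ L * dist (e n) (e m) :=
    le_of_tendsto_of_tendsto' ((hF n).dist (hF m)) (((ht' n).dist (ht' m)).const_mul L)
      fun ℓ => hf _ _ _
  obtain ⟨G, hG⟩ := exists_extension_of_dist_le hC hSD hFC hF_lip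
  exact ⟨φ, hφ, G, fun s hs => (hG s hs).1,
    fun s hs s' hs' => dist_le_of_forall_dist_le hSD (fun s hs => (hG s hs).2) hs hs',
    fun ε hε => eventually_forall_dist_lt_of_tendsto hS hL hSD (fun ℓ => hpS (φ ℓ))
      (fun ℓ => hf (φ ℓ)) ht' hF (fun s hs => (hG s hs).2) hε⟩

end LipschitzLimit

section EmpiricalEmbedding

variable {X H₀ : Type*} (Φ : X → H₀)

def empEmbedRange [AddCommMonoid H₀] [Module ℝ H₀] (M : ℕ) : Set H₀ :=
  range fun x : Fin M → X => empEmbed Φ x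

variable [AddCommGroup H₀] [Module ℝ H₀]

lemma empEmbed_replicate {M k : ℕ} (hk : k ≠ 0) (x : Fin M → X) :
    empEmbed Φ (fun j : Fin (M * k) => x (finProdFinEquiv.symm j).1) = empEmbed Φ x := by
  unfold empEmbed
  rw [← finProdFinEquiv.sum_comp, Fintype.sum_prod_type]
  simp only [Equiv.symm_apply_apply, Finset.sum_const, Finset.card_univ, Fintype.card_fin,
    ← Finset.smul_sum, ← Nat.cast_smul_eq_nsmul ℝ, smul_smul]
  congr 1
  have : (k : ℝ) ≠ 0 := Nat.cast_ne_zero.2 hk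
  push_cast
  field_simp

lemma empEmbedRange_subset_of_dvd {M N : ℕ} (h : M ∣ N) (hN : N ≠ 0) :
    empEmbedRange Φ M ⊆ empEmbedRange Φ N := by
  obtain ⟨k, rfl⟩ := h
  rintro _ ⟨x, rfl⟩
  exact ⟨_, empEmbed_replicate Φ (right_ne_zero_of_mul hN) x⟩

lemma empEmbed_append {M : ℕ} (x y : Fin M → X) :
    empEmbed Φ (Fin.append x y) = midpoint ℝ (empEmbed Φ x) (empEmbed Φ y) := by
  simp only [empEmbed, Fin.sum_univ_add, Fin.append_left, Fin.append_right,
    midpoint_eq_smul_add, invOf_eq_inv]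
  push_cast
  module

lemma midpoint_mem_iUnion_empEmbedRange {a b : H₀} (ha : a ∈ ⋃ M, empEmbedRange Φ (M + 1))
    (hb : b ∈ ⋃ M, empEmbedRange Φ (M + 1)) :
    midpoint ℝ a b ∈ ⋃ M, empEmbedRange Φ (M + 1) := by
  obtain ⟨M, ha⟩ := mem_iUnion.1 ha
  obtain ⟨N, hb⟩ := mem_iUnion.1 hb
  set K := (M + 1) * (N + 1)
  have hK : K ≠ 0 := by positivity
  obtain ⟨x, rfl⟩ := empEmbedRange_subset_of_dvd Φ (dvd_mul_right _ _) hK ha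
  obtain ⟨y, rfl⟩ := empEmbedRange_subset_of_dvd Φ (dvd_mul_left _ _) hK hb
  refine mem_iUnion.2 ⟨K + K - 1, ?_⟩
  rw [Nat.sub_add_cancel (by omega)]
  exact ⟨_, empEmbed_append Φ x y⟩

lemma convex_closure_iUnion_empEmbedRange [TopologicalSpace H₀] [IsTopologicalAddGroup H₀]
    [ContinuousSMul ℝ H₀] :
    Convex ℝ (closure (⋃ M, empEmbedRange Φ (M + 1))) :=
  isClosed_closure.convex_of_midpoint_mem fun _ ha _ hb =>
    map_mem_closure₂ (continuous_iff_continuousAt.2 fun q =>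
      (continuous_fst.tendsto q).midpoint (continuous_snd.tendsto q)) ha hb
      fun _ ha _ hb => midpoint_mem_iUnion_empEmbedRange Φ ha hb

end EmpiricalEmbedding

section KernelMeanEmbedding

variable {X H₀ : Type*} [MeasurableSpace X] [NormedAddCommGroup H₀] [NormedSpace ℝ H₀]
  [CompleteSpace H₀] {Φ : X → H₀}

lemma empEmbed_mem_kmeImage (hΦ : StronglyMeasurable Φ) {M : ℕ} (hM : M ≠ 0) (x : Fin M → X) :
    empEmbed Φ x ∈ kmeImage Φ := by
  refine ⟨(M : ℝ≥0∞)⁻¹ • ∑ m, Measure.dirac (x m), ⟨?_⟩, ?_⟩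
  · simp [ENNReal.inv_mul_cancel (Nat.cast_ne_zero.2 hM)]
  · rw [integral_smul_measure, integral_finsetSum_measure fun m _ =>
      integrable_dirac' hΦ enorm_lt_top]
    simp [integral_dirac' _ _ hΦ, empEmbed]

lemma kmeImage_subset_closure_iUnion_empEmbedRange
    (hΦ : StronglyMeasurable Φ) {B : ℝ} (hB : ∀ x, ‖Φ x‖ ≤ B) :
    kmeImage Φ ⊆ closure (⋃ M, empEmbedRange Φ (M + 1)) := by
  rintro _ ⟨μ, hμ, rfl⟩
  refine (convex_closure_iUnion_empEmbedRange Φ).integral_mem isClosed_closure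
    (ae_of_all _ fun x => subset_closure (mem_iUnion.2 ⟨0, fun _ => x, by simp [empEmbed]⟩))
    (Integrable.of_bound hΦ.aestronglyMeasurable B (ae_of_all _ hB))

lemma exists_tendsto_empEmbed_factorial (hΦ : StronglyMeasurable Φ) {B : ℝ}
    (hB : ∀ x, ‖Φ x‖ ≤ B) {s : H₀} (hs : s ∈ kmeImage Φ) :
    ∃ t : ∀ ℓ, Fin (ℓ + 1).factorial → X, Tendsto (fun ℓ => empEmbed Φ (t ℓ)) atTop (𝓝 s) := by
  have : Nonempty X := by
    obtain ⟨μ, hμ, -⟩ := hs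
    exact nonempty_of_isProbabilityMeasure μ
  obtain ⟨b, hb, hbs⟩ := exists_seq_tendsto_of_mem_closure_iUnion
    (B := fun ℓ => empEmbedRange Φ (ℓ + 1).factorial) (fun ℓ => range_nonempty _)
    (fun M => eventually_atTop.2 ⟨M, fun ℓ hℓ => empEmbedRange_subset_of_dvd Φ
      (Nat.dvd_factorial M.succ_pos (by omega)) (Nat.factorial_ne_zero _)⟩)
    (kmeImage_subset_closure_iUnion_empEmbedRange hΦ hB hs)
  choose t ht using hb
  exact ⟨t, by simpa only [ht] using hbs⟩

end KernelMeanEmbedding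

theorem mfl_feedback_maps_general
    {X : Type*} [MeasurableSpace X]
    {H₀ : Type*} [NormedAddCommGroup H₀] [InnerProductSpace ℝ H₀] [CompleteSpace H₀]
    {H : Type*} [NormedAddCommGroup H]
    (Φ : X → H₀) (hΦmeas : StronglyMeasurable Φ) (hΦbdd : ∃ C : ℝ, ∀ x : X, ‖Φ x‖ ≤ C)
    -- the image of the kernel mean embedding is compact
    (hScpt : IsCompact (kmeImage Φ))
    (C : Set H) (hCcpt : IsCompact C)
    (g : (M : ℕ) → (Fin M → X) → H)
    (hgC : ∀ M : ℕ, 1 ≤ M → ∀ x : Fin M → X, g M x ∈ C)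
    (L : ℝ) (hL : 0 ≤ L)
    -- (2) uniform Lipschitz continuity w.r.t. the embedded empirical measures
    (hlip : ∀ M : ℕ, 1 ≤ M → ∀ x x' : Fin M → X,
      ‖g M x - g M x'‖ ≤ L * ‖empEmbed Φ x - empEmbed Φ x'‖) :
    ∃ Msub : ℕ → ℕ, StrictMono Msub ∧ (∀ ℓ : ℕ, 1 ≤ Msub ℓ) ∧
      ∃ G : H₀ → H,
        (∀ s ∈ kmeImage Φ, G s ∈ C) ∧
        (∀ s ∈ kmeImage Φ, ∀ s' ∈ kmeImage Φ, ‖G s - G s'‖ ≤ L * ‖s - s'‖) ∧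
        (∀ ε : ℝ, 0 < ε → ∃ N : ℕ, ∀ ℓ : ℕ, N ≤ ℓ → ∀ x : Fin (Msub ℓ) → X,
          ‖g (Msub ℓ) x - G (empEmbed Φ x)‖ ≤ ε) := by
  obtain ⟨B, hB⟩ := hΦbdd
  have hM ℓ : 1 ≤ (ℓ + 1).factorial := Nat.factorial_pos _
  obtain ⟨φ, hφ, G, hGC, hG_lip, hG_lim⟩ := exists_strictMono_uniform_limit_of_lipschitz
    (ι := fun ℓ => Fin (ℓ + 1).factorial → X) hScpt hCcpt hL (fun _ x => empEmbed Φ x)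
    (fun _ x => g _ x) (fun _ => empEmbed_mem_kmeImage hΦmeas (Nat.factorial_ne_zero _))
    (fun ℓ => hgC _ (hM ℓ)) (fun ℓ x x' => by simpa only [dist_eq_norm] using hlip _ (hM ℓ) x x')
    fun s hs => exists_tendsto_empEmbed_factorial hΦmeas hB hs
  refine ⟨fun ℓ => (φ ℓ + 1).factorial, fun a b hab => (Nat.factorial_lt (Nat.succ_pos _)).2
      (Nat.succ_lt_succ (hφ hab)), fun ℓ => hM (φ ℓ), G, hGC,
    fun s hs s' hs' => by simpa only [dist_eq_norm] using hG_lip s hs s' hs', fun ε hε => ?_⟩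
  obtain ⟨N, hN⟩ := eventually_atTop.1 (hG_lim ε hε)
  exact ⟨N, fun ℓ hℓ x => by simpa only [dist_eq_norm] using (hN ℓ hℓ x).le⟩

/-- Mean field limit existence for feedback maps: given permutation-invariant maps
`g_M : X^M → C` into a compact convex set `C`, uniformly Lipschitz w.r.t. the embedded
empirical measures, there are a subsequence `M_ℓ` and an `L`-Lipschitz map `G : S → C`
with `sup_{x ∈ X^{M_ℓ}} ‖g_{M_ℓ}(x) - G(Π̂(x))‖ → 0`. -/
theorem mfl_feedback_maps
    {X : Type*} [MetricSpace X] [MeasurableSpace X] [BorelSpace X]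
    {H₀ : Type*} [NormedAddCommGroup H₀] [InnerProductSpace ℝ H₀] [CompleteSpace H₀]
    {H : Type*} [NormedAddCommGroup H] [InnerProductSpace ℝ H] [CompleteSpace H]
    (Φ : X → H₀) (hΦmeas : StronglyMeasurable Φ) (hΦbdd : ∃ C : ℝ, ∀ x : X, ‖Φ x‖ ≤ C)
    -- the kernel is characteristic: the kernel mean embedding is injective
    (hinj : ∀ μ ν : Measure X, IsProbabilityMeasure μ → IsProbabilityMeasure ν →
      (∫ y, Φ y ∂μ) = (∫ y, Φ y ∂ν) → μ = ν)
    -- the image of the kernel mean embedding is compact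
    (hScpt : IsCompact (kmeImage Φ))
    (C : Set H) (hCcpt : IsCompact C) (hCconv : Convex ℝ C)
    (g : (M : ℕ) → (Fin M → X) → H)
    (hgC : ∀ M : ℕ, 1 ≤ M → ∀ x : Fin M → X, g M x ∈ C)
    -- (1) permutation invariance
    (hperm : ∀ M : ℕ, 1 ≤ M → ∀ σ : Equiv.Perm (Fin M), ∀ x : Fin M → X,
      g M (x ∘ σ) = g M x)
    (L : ℝ) (hL : 0 ≤ L)
    -- (2) uniform Lipschitz continuity w.r.t. the embedded empirical measures
    (hlip : ∀ M : ℕ, 1 ≤ M → ∀ x x' : Fin M → X,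
      ‖g M x - g M x'‖ ≤ L * ‖empEmbed Φ x - empEmbed Φ x'‖) :
    ∃ Msub : ℕ → ℕ, StrictMono Msub ∧ (∀ ℓ : ℕ, 1 ≤ Msub ℓ) ∧
      ∃ G : H₀ → H,
        (∀ s ∈ kmeImage Φ, G s ∈ C) ∧
        (∀ s ∈ kmeImage Φ, ∀ s' ∈ kmeImage Φ, ‖G s - G s'‖ ≤ L * ‖s - s'‖) ∧
        (∀ ε : ℝ, 0 < ε → ∃ N : ℕ, ∀ ℓ : ℕ, N ≤ ℓ → ∀ x : Fin (Msub ℓ) → X,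
          ‖g (Msub ℓ) x - G (empEmbed Φ x)‖ ≤ ε) :=
  mfl_feedback_maps_general Φ hΦmeas hΦbdd hScpt C hCcpt g hgC L hL hlip
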